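/- Let T be a finite multigraph whose edges are each colored red or blue, with red-subgraph R and blue-subgraph B. Every connected component of T is an alternating circuit if and only if d_R(v) = d_B(v) for every vertex v of T. -/

import Mathlib

open SimpleGraph

variable {V : Type*}

/-- The quotient multigraph `H/Q` of a graph by a partition (setoid), with parts adjacent
iff some edge of `H` joins them. -/
def quotGraph (H : SimpleGraph V) (s : Setoid V) : SimpleGraph (Quotient s) where
  Adj x y := x ≠ y ∧ ∃ u v : V, Quotient.mk s u = x ∧ Quotient.mk s v = y ∧ H.Adj u v
  symm := ⟨by rintro x y ⟨h, u, v, hu, hv, ha⟩; exact ⟨h.symm, v, u, hv, hu, ha.symm⟩⟩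
  loopless := ⟨by rintro x ⟨h, _⟩; exact h rfl⟩

/-- `H` connects the partition `Q` if the quotient `H/Q` is connected. -/
def Connects (H : SimpleGraph V) (s : Setoid V) : Prop := (quotGraph H s).Connected

/-- `H` is an `f`-factor of `G`: a spanning subgraph with degree `f v` at each vertex. -/
def IsFFactor (G H : SimpleGraph V) (f : V → ℕ) : Prop :=
  H ≤ G ∧ ∀ v : V, (H.neighborSet v).ncard = f v

/-- A list of edges alternates in color, cyclically (consecutive edges have distinct colors,
including the last/first pair for a closed tour). -/
def AltChain (red : Sym2 V → Prop) (l : List (Sym2 V)) : Prop :=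
  List.Chain' (fun e f => ¬ (red e ↔ red f)) (l ++ l.take 1)

/-- `S` is an alternating circuit: it admits a closed Eulerian tour in which every pair
of consecutive edges have different colors. -/
def IsAlternatingCircuit (S : SimpleGraph V) (red : Sym2 V → Prop) : Prop :=
  letI := Classical.decEq V
  ∃ (v : V) (w : S.Walk v v), w.IsEulerian ∧ AltChain red w.edges

/-- The subgraph of `T` consisting of a single connected component `K`. -/
def compGraph (T : SimpleGraph V) (K : T.ConnectedComponent) : SimpleGraph V where
  Adj u v := T.Adj u v ∧ T.connectedComponentMk u = K
  symm := by
    constructor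
    rintro u v ⟨h, hk⟩
    exact ⟨h.symm, (ConnectedComponent.sound h.symm.reachable).trans hk⟩
  loopless := ⟨by rintro v ⟨h, _⟩; exact h.ne rfl⟩

/-- `S` is a switch on `H`: coloring edges of `S ∩ H` red and edges of `S \ H` blue,
every connected component of `S` is an alternating circuit. -/
def IsSwitch (S H : SimpleGraph V) : Prop :=
  ∀ K : S.ConnectedComponent, IsAlternatingCircuit (compGraph S K) (fun e => e ∈ H.edgeSet)

/-- A minimal alternating circuit: each vertex has at most two red and two blue incident edges. -/
def IsMinimalAC (S : SimpleGraph V) (red : Sym2 V → Prop) : Prop :=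
  IsAlternatingCircuit S red ∧ ∀ v : V,
    {u | S.Adj v u ∧ red s(v, u)}.ncard ≤ 2 ∧ {u | S.Adj v u ∧ ¬ red s(v, u)}.ncard ≤ 2

/-- `Switching(H, T)`: remove the edges of `T ∩ H` from `H` and add the edges of `T \ H`. -/
def switching (H T : SimpleGraph V) : SimpleGraph V where
  Adj u v := (H.Adj u v ∧ ¬ T.Adj u v) ∨ (T.Adj u v ∧ ¬ H.Adj u v)
  symm := by
    constructor
    rintro u v (⟨h1, h2⟩ | ⟨h1, h2⟩)
    · exact Or.inl ⟨h1.symm, fun h => h2 h.symm⟩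
    · exact Or.inr ⟨h1.symm, fun h => h2 h.symm⟩
  loopless := ⟨by rintro v (⟨h, _⟩ | ⟨h, _⟩) <;> exact h.ne rfl⟩

/-- Total weight of the edges of a graph. -/
noncomputable def wt (w : Sym2 V → ℝ) (G : SimpleGraph V) : ℝ := ∑ᶠ e ∈ G.edgeSet, w e

/-! At each vertex a closed alternating trail uses as many red as blue edges, since every passage
through a vertex enters and leaves it along edges of different colours; as the tour of a component
uses every edge at each of its vertices, this gives `d_R = d_B`. Conversely (Kotzig), in a balanced
connected graph a longest closed alternating trail uses every edge: otherwise it passes through a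
vertex with an unused edge, the unused edges again form a balanced graph, and a closed alternating
trail through that vertex in it can be spliced in, reversed if necessary to match the colours. -/

open scoped Classical

section AltChain

variable {red : Sym2 V → Prop} {l l₁ l₂ : List (Sym2 V)}

theorem altChain_iff_isChain :
    AltChain red l ↔ l.IsChain (fun e f => ¬ (red e ↔ red f)) ∧
      ∀ x ∈ l.getLast?, ∀ y ∈ l.head?, ¬ (red x ↔ red y) := by
  show List.IsChain _ (l ++ l.take 1) ↔ _
  rw [List.isChain_append, List.head?_take]
  rcases l with _ | ⟨e, l⟩ <;> simp

theorem altChain_iff_cycleChain :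
    AltChain red l ↔ Cycle.Chain (fun e f => ¬ (red e ↔ red f)) (l : Cycle (Sym2 V)) := by
  rcases l with _ | ⟨e, l⟩
  · exact iff_of_true .nil (Cycle.Chain.nil _)
  · rfl

theorem AltChain.isRotated (h : AltChain red l₁) (hr : l₁ ~r l₂) : AltChain red l₂ := by
  rw [altChain_iff_cycleChain] at h ⊢
  rwa [← Cycle.coe_eq_coe.mpr hr]

theorem AltChain.reverse (h : AltChain red l) : AltChain red l.reverse := by
  rw [altChain_iff_isChain] at h ⊢
  simp only [List.isChain_reverse, List.getLast?_reverse, List.head?_reverse]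
  exact ⟨h.1.imp fun hef => by tauto, fun x hx y hy => by have := h.2 y hy x hx; tauto⟩

theorem AltChain.append (h₁ : AltChain red l₁) (h₂ : AltChain red l₂)
    (h : ∀ x ∈ l₁.head?, ∀ y ∈ l₂.head?, red x ↔ red y) : AltChain red (l₁ ++ l₂) := by
  rcases l₁ with _ | ⟨x, l₁⟩
  · simpa using h₂
  rcases l₂ with _ | ⟨y, l₂⟩
  · simpa using h₁
  rw [altChain_iff_isChain] at h₁ h₂ ⊢
  simp only [List.head?_cons, Option.mem_def, Option.some.injEq, forall_eq'] at h h₁ h₂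
  rw [List.isChain_append, List.getLast?_append_of_ne_nil _ (List.cons_ne_nil _ _)]
  simp only [List.head?_cons, List.cons_append, Option.mem_def, Option.some.injEq, forall_eq']
  exact ⟨⟨h₁.1, h₂.1, fun z hz => by have := h₁.2 z hz; tauto⟩, fun z hz => by
    have := h₂.2 z hz; tauto⟩

end AltChain

section Excess

variable (red : Sym2 V → Prop)

noncomputable def endSign : Option (Sym2 V) → ℤ
  | none => 0
  | some e => if red e then 1 else -1

noncomputable def colorCount (c : Sym2 V → Prop) (v : V) (l : List (Sym2 V)) : ℕ :=
  l.countP fun e => v ∈ e ∧ c e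

noncomputable def colorExcess (v : V) (l : List (Sym2 V)) : ℤ :=
  colorCount red v l - colorCount (fun e => ¬ red e) v l

variable {red}

theorem colorExcess_cons (v : V) (e : Sym2 V) (l : List (Sym2 V)) :
    colorExcess red v (e :: l) = (if v ∈ e then endSign red (some e) else 0) +
      colorExcess red v l := by
  by_cases hv : v ∈ e <;> by_cases he : red e <;>
    simp [colorExcess, colorCount, endSign, hv, he] <;> ring

theorem AltChain.endSign_head? {l : List (Sym2 V)} (h : AltChain red l) :
    endSign red l.head? = - endSign red l.getLast? := by
  rcases l with _ | ⟨e, l⟩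
  · rfl
  · have hl := List.getLast?_eq_some_getLast (List.cons_ne_nil e l)
    have := (altChain_iff_isChain.mp h).2 _ hl e rfl
    simp only [List.head?_cons, hl, endSign]
    split_ifs <;> tauto

namespace SimpleGraph.Walk

variable {G : SimpleGraph V}

theorem colorExcess_edges_of_isChain {a b : V} (w : G.Walk a b)
    (hw : w.edges.IsChain (fun e f => ¬ (red e ↔ red f))) (v : V) :
    colorExcess red v w.edges = (if v = a then endSign red w.edges.head? else 0) +
      (if v = b then endSign red w.edges.getLast? else 0) := by
  induction w with
  | nil => simp [colorExcess, colorCount, endSign]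
  | @cons a c b hac p ih =>
    rw [edges_cons] at hw ⊢
    rw [colorExcess_cons, ih hw.tail]
    rcases hp : p.edges with _ | ⟨f, l⟩
    · obtain rfl : c = b := p.eq_of_length_eq_zero (by rw [← length_edges, hp]; rfl)
      have := hac.ne
      by_cases hva : v = a <;> by_cases hvc : v = c <;> simp_all [endSign]
    · rw [hp, List.isChain_cons_cons] at hw
      have := hac.ne
      by_cases hva : v = a <;> by_cases hvc : v = c <;> by_cases hr : red s(a, c) <;>
        by_cases hf : red f <;> simp_all [endSign, List.getLast?_cons]

theorem colorExcess_edges_eq_zero {a : V} (w : G.Walk a a) (hw : AltChain red w.edges) (v : V) :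
    colorExcess red v w.edges = 0 := by
  rw [w.colorExcess_edges_of_isChain (altChain_iff_isChain.mp hw).1, hw.endSign_head?]
  split_ifs <;> ring

end SimpleGraph.Walk

end Excess

section Balanced

variable (red : Sym2 V → Prop)

noncomputable def colorDegree (E : Set (Sym2 V)) (c : Sym2 V → Prop) (v : V) : ℕ :=
  {e ∈ E | v ∈ e ∧ c e}.ncard

def IsBalanced (E : Set (Sym2 V)) : Prop :=
  ∀ v, colorDegree E red v = colorDegree E (fun e => ¬ red e) v

variable {red}

theorem List.Nodup.colorDegree_setOf_mem {l : List (Sym2 V)} (hl : l.Nodup)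
    (c : Sym2 V → Prop) (v : V) :
    colorDegree {e | e ∈ l} c v = colorCount c v l := by
  rw [colorCount, List.countP_eq_length_filter, ← List.toFinset_card_of_nodup (hl.filter _),
    ← Set.ncard_coe_finset, colorDegree]
  congr 1
  ext e
  simp

theorem colorDegree_mono [Finite V] {E F : Set (Sym2 V)} (h : E ⊆ F) (c : Sym2 V → Prop)
    (v : V) : colorDegree E c v ≤ colorDegree F c v :=
  Set.ncard_le_ncard fun _ he => ⟨h he.1, he.2⟩

theorem IsBalanced.diff [Finite V] {E F : Set (Sym2 V)} (hE : IsBalanced red E)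
    (hF : IsBalanced red F) (hFE : F ⊆ E) : IsBalanced red (E \ F) := by
  have key : ∀ c v, colorDegree (E \ F) c v = colorDegree E c v - colorDegree F c v := by
    intro c v
    have hsub : {e ∈ F | v ∈ e ∧ c e} ⊆ {e ∈ E | v ∈ e ∧ c e} := fun _ he => ⟨hFE he.1, he.2⟩
    rw [colorDegree, colorDegree, colorDegree, ← Set.ncard_sdiff hsub]
    congr 1
    ext e
    simp only [Set.mem_sdiff, Set.mem_ofPred_eq]
    tauto
  intro v
  rw [key, key, hE v, hF v]

theorem SimpleGraph.Walk.IsTrail.isBalanced_edges {G : SimpleGraph V} {a : V} {w : G.Walk a a}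
    (ht : w.IsTrail) (hw : AltChain red w.edges) : IsBalanced red {e | e ∈ w.edges} := by
  intro v
  have := w.colorExcess_edges_eq_zero hw v
  rw [colorExcess] at this
  rw [ht.edges_nodup.colorDegree_setOf_mem, ht.edges_nodup.colorDegree_setOf_mem]
  omega

theorem IsAlternatingCircuit.isBalanced {G : SimpleGraph V} (h : IsAlternatingCircuit G red) :
    IsBalanced red G.edgeSet := by
  obtain ⟨a, w, hE, hw⟩ := h
  convert hE.isTrail.isBalanced_edges hw using 1
  ext e
  exact hE.mem_edges_iff.symm

end Balanced

theorem exists_max_of_forall_le {α : Type*} {P : α → Prop} (f : α → ℕ) {N : ℕ}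
    (hP : ∃ x, P x) (hN : ∀ x, P x → f x ≤ N) : ∃ x, P x ∧ ∀ y, P y → f y ≤ f x := by
  have hbdd : BddAbove (f '' {x | P x}) := ⟨N, by rintro _ ⟨x, hx, rfl⟩; exact hN x hx⟩
  obtain ⟨x, hx, hfx⟩ := Nat.sSup_mem (Set.Nonempty.image f hP) hbdd
  exact ⟨x, hx, fun y hy => hfx ▸ le_csSup hbdd ⟨y, hy, rfl⟩⟩

section Kotzig

variable {red : Sym2 V → Prop} {G : SimpleGraph V}

theorem IsBalanced.eq_and_altChain_of_saturated [Finite V] (hG : IsBalanced red G.edgeSet)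
    {a b : V} {w : G.Walk a b} (ht : w.IsTrail)
    (hch : w.edges.IsChain (fun e f => ¬ (red e ↔ red f))) (hne : w.edges ≠ [])
    (hsat : ∀ u, G.Adj b u → ¬ (red (w.edges.getLast hne) ↔ red s(b, u)) → s(b, u) ∈ w.edges) :
    b = a ∧ AltChain red w.edges := by
  set ℓ := w.edges.getLast hne
  have hfull : ∀ c : Sym2 V → Prop, (∀ e, c e → ¬ (red ℓ ↔ red e)) →
      colorDegree G.edgeSet c b ≤ colorDegree {e | e ∈ w.edges} c b := by
    intro c hc
    refine Set.ncard_le_ncard ?_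
    rintro e ⟨he, hbe, hce⟩
    obtain ⟨u, rfl⟩ := Sym2.mem_iff_exists.mp hbe
    exact ⟨hsat u he (hc _ hce), hbe, hce⟩
  have hsub : ∀ c, colorDegree {e | e ∈ w.edges} c b ≤ colorDegree G.edgeSet c b :=
    fun c => colorDegree_mono (fun _ he => w.edges_subset_edgeSet he) c b
  obtain ⟨h₀, hh₀⟩ : ∃ h₀, w.edges.head? = some h₀ := ⟨_, List.head?_eq_some_head hne⟩
  have hexc := w.colorExcess_edges_of_isChain hch b
  rw [colorExcess, ← ht.edges_nodup.colorDegree_setOf_mem,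
    ← ht.edges_nodup.colorDegree_setOf_mem, hh₀, List.getLast?_eq_some_getLast hne] at hexc
  have hbal := hG b
  have key : b = a ∧ ¬ (red ℓ ↔ red h₀) := by
    have hR := hsub red
    have hB := hsub (fun e => ¬ red e)
    have hℓR : red ℓ → colorDegree G.edgeSet (fun e => ¬ red e) b ≤
        colorDegree {e | e ∈ w.edges} (fun e => ¬ red e) b := fun hℓ => hfull _ (by tauto)
    have hℓB : ¬ red ℓ → colorDegree G.edgeSet red b ≤ colorDegree {e | e ∈ w.edges} red b :=
      fun hℓ => hfull _ (by tauto)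
    by_cases hℓ : red ℓ <;> by_cases h0 : red h₀ <;>
      simp only [endSign, hℓ, h0, if_true, if_false, true_implies, not_true, false_implies,
        iff_true, iff_false, not_false_eq_true, and_true, and_false] at hexc hℓR hℓB ⊢ <;>
      split_ifs at hexc with hba <;> first | exact hba | omega
  refine ⟨key.1, altChain_iff_isChain.mpr ⟨hch, ?_⟩⟩
  simpa only [List.getLast?_eq_some_getLast hne, hh₀, Option.mem_def, Option.some.injEq,
    forall_eq'] using key.2

/-- A longest alternating trail from `a` cannot be extended at its end, so it is saturated. -/
theorem exists_closed_altTrail_of_adj [Fintype V] (hG : IsBalanced red G.edgeSet) {a x : V}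
    (hax : G.Adj a x) : ∃ w : G.Walk a a, w.IsTrail ∧ AltChain red w.edges ∧ w.edges ≠ [] := by
  obtain ⟨⟨b, w⟩, ⟨ht, hch, hne⟩, hmax⟩ := exists_max_of_forall_le
    (P := fun p : Σ b, G.Walk a b => p.2.IsTrail ∧
      p.2.edges.IsChain (fun e f => ¬ (red e ↔ red f)) ∧ p.2.edges ≠ [])
    (fun p => p.2.length) (N := Fintype.card (Sym2 V))
    ⟨⟨x, .cons hax .nil⟩, by simp, by simp, by simp⟩
    (fun p hp => p.2.length_edges ▸ hp.1.edges_nodup.length_le_card)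
  dsimp only at ht hch hne hmax
  obtain ⟨rfl, hw⟩ := hG.eq_and_altChain_of_saturated ht hch hne fun u hbu hℓ => by
    by_contra hnot
    have := hmax ⟨u, w.concat hbu⟩ ⟨?_, ?_, by simp⟩
    · simp at this
    · rw [Walk.isTrail_def, Walk.edges_concat, List.concat_eq_append]
      exact ht.edges_nodup.append (List.nodup_singleton _) (by simpa)
    · rw [Walk.edges_concat, List.concat_eq_append]
      refine hch.append (List.isChain_singleton _) ?_
      simpa only [List.getLast?_eq_some_getLast hne, List.head?_cons, Option.mem_def,
        Option.some.injEq, forall_eq'] using hℓ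
  exact ⟨w, ht, hw, hne⟩

theorem exists_altTrail_length_eq_add {v : V} {W₁ W₂ : G.Walk v v} (ht₁ : W₁.IsTrail)
    (ht₂ : W₂.IsTrail) (h₁ : AltChain red W₁.edges) (h₂ : AltChain red W₂.edges)
    (hdisj : W₁.edges.Disjoint W₂.edges) :
    ∃ W : G.Walk v v, W.IsTrail ∧ AltChain red W.edges ∧ W.length = W₁.length + W₂.length := by
  by_cases hc : ∀ x ∈ W₁.edges.head?, ∀ y ∈ W₂.edges.head?, red x ↔ red y
  · refine ⟨W₁.append W₂, ⟨?_⟩, ?_, Walk.length_append _ _⟩ <;> rw [Walk.edges_append]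
    · exact ht₁.edges_nodup.append ht₂.edges_nodup hdisj
    · exact h₁.append h₂ hc
  · -- the last edge of `W₁` has the colour opposite to its first one
    refine ⟨W₁.reverse.append W₂, ⟨?_⟩, ?_, by simp⟩ <;> rw [Walk.edges_append, Walk.edges_reverse]
    · exact (List.nodup_reverse.mpr ht₁.edges_nodup).append ht₂.edges_nodup
        (List.disjoint_reverse_left.mpr hdisj)
    · refine h₁.reverse.append h₂ fun z hz y' hy' => ?_
      push Not at hc
      obtain ⟨x, hx, y, hy, hxy⟩ := hc
      rw [List.head?_reverse] at hz
      have := (altChain_iff_isChain.mp h₁).2 z hz x hx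
      obtain rfl : y' = y := Option.mem_unique hy' hy
      tauto

theorem SimpleGraph.Walk.exists_adj_notMem_edges {u w x y z : V} (W : G.Walk u w)
    (p : G.Walk x y) (hx : x ∈ W.support) (hyz : G.Adj y z) (h : s(y, z) ∉ W.edges) :
    ∃ v ∈ W.support, ∃ z, G.Adj v z ∧ s(v, z) ∉ W.edges := by
  induction p with
  | nil => exact ⟨_, hx, z, hyz, h⟩
  | @cons x c y hxc q ih =>
    by_cases hmem : s(x, c) ∈ W.edges
    · exact ih (W.snd_mem_support_of_mem_edges hmem) hyz h
    · exact ⟨x, hx, c, hxc, hmem⟩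

theorem isAlternatingCircuit_of_isBalanced [Fintype V] (hG : IsBalanced red G.edgeSet) {a : V}
    (hconn : ∀ u v, G.Adj u v → G.Reachable a u) : IsAlternatingCircuit G red := by
  obtain ⟨⟨b, W⟩, ⟨hab, ht, hW⟩, hmax⟩ := exists_max_of_forall_le
    (P := fun p : Σ b, G.Walk b b => G.Reachable a p.1 ∧ p.2.IsTrail ∧ AltChain red p.2.edges)
    (fun p => p.2.length) (N := Fintype.card (Sym2 V))
    ⟨⟨a, .nil⟩, .rfl, by simp, altChain_iff_isChain.mpr (by simp)⟩
    (fun p hp => p.2.length_edges ▸ hp.2.1.edges_nodup.length_le_card)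
  dsimp only at hab ht hW hmax
  refine ⟨b, W, ht.isEulerian_of_forall_mem fun e he => ?_, hW⟩
  by_contra heW
  induction e using Sym2.ind with | _ x y => ?_
  obtain ⟨p⟩ := hab.symm.trans (hconn x y he)
  obtain ⟨v, hv, z, hvz, hvzW⟩ := W.exists_adj_notMem_edges p W.start_mem_support he heW
  set G' := G.deleteEdges {e | e ∈ W.edges}
  have hG' : IsBalanced red G'.edgeSet := by
    rw [edgeSet_deleteEdges]
    exact hG.diff (ht.isBalanced_edges hW) fun _ he => W.edges_subset_edgeSet he
  obtain ⟨Wv, htv, hAv, hnev⟩ :=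
    exists_closed_altTrail_of_adj hG' (x := z) (by simpa [G'] using ⟨hvz, hvzW⟩)
  have hle : G' ≤ G := deleteEdges_le _
  have hdisj : (W.rotate v hv).edges.Disjoint (Wv.mapLe hle).edges := by
    intro e he he'
    rw [(W.rotate_edges v hv).mem_iff] at he
    rw [Walk.edges_mapLe_eq_edges] at he'
    have := Wv.edges_subset_edgeSet he'
    simp [G', he] at this
  obtain ⟨W₂, ht₂, hA₂, hlen⟩ := exists_altTrail_length_eq_add (ht.rotate hv) (htv.mapLe hle)
    (hW.isRotated (W.rotate_edges v hv).symm) (by rwa [Walk.edges_mapLe_eq_edges]) hdisj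
  have := hmax ⟨v, W₂⟩ ⟨hab.trans ⟨W.takeUntil v hv⟩, ht₂, hA₂⟩
  have : 0 < Wv.length := by rw [← Walk.length_edges]; exact List.length_pos_iff.mpr hnev
  simp_all

end Kotzig

section Components

variable (T : SimpleGraph V) (K : T.ConnectedComponent)

theorem mem_edgeSet_compGraph_iff {v : V} {e : Sym2 V} (hv : v ∈ e) :
    e ∈ (compGraph T K).edgeSet ↔ e ∈ T.edgeSet ∧ T.connectedComponentMk v = K := by
  obtain ⟨u, rfl⟩ := Sym2.mem_iff_exists.mp hv
  exact Iff.rfl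

theorem colorDegree_compGraph (c : Sym2 V → Prop) (v : V) :
    colorDegree (compGraph T K).edgeSet c v =
      if T.connectedComponentMk v = K then colorDegree T.edgeSet c v else 0 := by
  unfold colorDegree
  split_ifs with hv
  · congr 1
    ext e
    exact and_congr_left fun hve => (mem_edgeSet_compGraph_iff T K hve.1).trans (and_iff_left hv)
  · convert Set.ncard_empty (Sym2 V)
    refine Set.eq_empty_of_forall_notMem fun e ⟨he, hve, _⟩ => ?_
    exact hv ((mem_edgeSet_compGraph_iff T K hve).mp he).2

theorem IsBalanced.compGraph {red : Sym2 V → Prop} (h : IsBalanced red T.edgeSet) :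
    IsBalanced red (compGraph T K).edgeSet := fun v => by
  rw [colorDegree_compGraph, colorDegree_compGraph, h v]

theorem reachable_compGraph_out (u v : V) (h : (compGraph T K).Adj u v) :
    (compGraph T K).Reachable K.out u :=
  let toCompGraph : K.toSimpleGraph →g compGraph T K := ⟨Subtype.val, fun {x _} hxy => ⟨hxy, x.2⟩⟩
  (K.reachable_toSimpleGraph K.out_eq h.2).map toCompGraph

end Components

theorem SimpleGraph.ncard_incidenceSet (G : SimpleGraph V) (v : V) :
    (G.incidenceSet v).ncard = (G.neighborSet v).ncard :=
  Nat.card_congr (G.incidenceSetEquivNeighborSet v)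

theorem colorDegree_sup_left (R B : SimpleGraph V) (v : V) :
    colorDegree (R ⊔ B).edgeSet (· ∈ R.edgeSet) v = (R.neighborSet v).ncard := by
  rw [← R.ncard_incidenceSet, colorDegree]
  congr 1
  ext e
  simp only [incidenceSet, edgeSet_sup, Set.mem_union, Set.mem_ofPred_eq]
  tauto

theorem colorDegree_sup_right {R B : SimpleGraph V} (h : Disjoint R.edgeSet B.edgeSet) (v : V) :
    colorDegree (R ⊔ B).edgeSet (· ∉ R.edgeSet) v = (B.neighborSet v).ncard := by
  rw [← B.ncard_incidenceSet, colorDegree]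
  congr 1
  ext e
  have : e ∈ R.edgeSet → e ∉ B.edgeSet := fun he => Set.disjoint_left.mp h he
  simp only [incidenceSet, edgeSet_sup, Set.mem_union, Set.mem_ofPred_eq]
  tauto

theorem stmt5 {V : Type*} [Fintype V] (R B T : SimpleGraph V)
    (hdisj : Disjoint R.edgeSet B.edgeSet) (hT : T = R ⊔ B) :
    (∀ K : T.ConnectedComponent,
        IsAlternatingCircuit (compGraph T K) (fun e => e ∈ R.edgeSet)) ↔
      ∀ v : V, (R.neighborSet v).ncard = (B.neighborSet v).ncard := by
  subst hT
  constructor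
  · intro h v
    have := (h ((R ⊔ B).connectedComponentMk v)).isBalanced v
    rwa [colorDegree_compGraph, colorDegree_compGraph, if_pos rfl, if_pos rfl,
      colorDegree_sup_left, colorDegree_sup_right hdisj] at this
  · intro h K
    have hbal : IsBalanced (· ∈ R.edgeSet) (R ⊔ B).edgeSet := fun v => by
      rw [colorDegree_sup_left, colorDegree_sup_right hdisj]
      exact h v
    exact isAlternatingCircuit_of_isBalanced (hbal.compGraph _ K) (reachable_compGraph_out _ K)
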